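/- The elements e_k^{i_k}·e_{k−1}^{i_{k−1}}⋯e₁^{i₁}, for (i₁,…,i_k) ∈ [m₁]×⋯×[m_k], form a complete set of representatives of the right coset space F\G: every g ∈ G lies in exactly one coset F·(e_k^{i_k}⋯e₁^{i₁}), i.e., the map (i₁,…,i_k) ↦ F·e_k^{i_k}⋯e₁^{i₁} is a bijection from [m₁]×⋯×[m_k] onto the set of right cosets of F in G. -/

import Mathlib

open scoped commutatorElement

/-- The relators `eᵢ^{mᵢ}` defining `G = F_{2n} ∗ ℤ_{m₁} ∗ ⋯ ∗ ℤ_{m_k}`. -/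
def Grels (n k : ℕ) (m : ℕ → ℕ) : Set (FreeGroup (Fin k ⊕ Fin (2 * n))) :=
  Set.range (fun i : Fin k => FreeGroup.of (Sum.inl i) ^ m i.val)

/-- The group `G = ⟨e₁,…,e_k, h₁,…,h_{2n} ∣ e₁^{m₁} = ⋯ = e_k^{m_k} = 1⟩`,
i.e. the free product `F_{2n} ∗ ℤ_{m₁} ∗ ⋯ ∗ ℤ_{m_k}`. -/
abbrev GG (n k : ℕ) (m : ℕ → ℕ) : Type := PresentedGroup (Grels n k m)

/-- The generator `e_{i+1}` of `G` (0-indexed: `ee n k m i` is `e_{i+1}`). -/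
def ee (n k : ℕ) (m : ℕ → ℕ) (i : Fin k) : GG n k m := PresentedGroup.of (Sum.inl i)

/-- The generator `h_{j+1}` of `G` (0-indexed). -/
def hh (n k : ℕ) (m : ℕ → ℕ) (j : Fin (2 * n)) : GG n k m := PresentedGroup.of (Sum.inr j)

/-- The element `α = e₁e₂⋯e_k · [h₁,h₂][h₃,h₄]⋯[h_{2n-1},h_{2n}]` of `G`. -/
def alphaG (n k : ℕ) (m : ℕ → ℕ) : GG n k m :=
  (List.ofFn fun i : Fin k => ee n k m i).prod *
  (List.ofFn fun j : Fin n =>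
    ⁅hh n k m ⟨2 * j.val, by have := j.isLt; omega⟩,
      hh n k m ⟨2 * j.val + 1, by have := j.isLt; omega⟩⁆).prod

/-- The descending product `eChunk u s t = e_t^{u_t} ⋯ e_{s+1}^{u_{s+1}}` (0-indexed:
`e_{t-1}^{u(t-1)} * e_{t-2}^{u(t-2)} * ⋯ * e_s^{u s}`, empty product if `t ≤ s`). -/
def eChunk (n k : ℕ) (m : ℕ → ℕ) (u : ℕ → ℕ) (s : ℕ) : ℕ → GG n k m
  | 0 => 1
  | t + 1 =>
      if s ≤ t then (if h : t < k then ee n k m ⟨t, h⟩ ^ u t else 1) * eChunk n k m u s t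
      else 1

/-- The set `S₁ = { g_ξ f_λ g_ξ⁻¹ ∣ 2 ≤ t ≤ k, λ ∈ Λ_t, ξ ∈ Ξ_t }`, where, for
`λ = (u₁,…,u_t) ∈ Λ_t = (([m₁]×⋯×[m_{t-1}]) ∖ {(m₁,…,m_{t-1})}) × [m_t - 1]` and
`ξ = (u_{t+1},…,u_k) ∈ Ξ_t = [m_{t+1}]×⋯×[m_k]`, one sets
`f_λ = [e_t^{u_t}, e_{t-1}^{u_{t-1}}⋯e₁^{u₁}]` and `g_ξ = e_k^{u_k}⋯e_{t+1}^{u_{t+1}}`.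
(Everything is 0-indexed here: `u i` is `u_{i+1}`, and `eChunk u (t-1) t = e_t^{u_t}`.) -/
def S1set (n k : ℕ) (m : ℕ → ℕ) : Set (GG n k m) :=
  { x | ∃ (t : ℕ) (u : ℕ → ℕ), 2 ≤ t ∧ t ≤ k ∧
      (∀ i < t - 1, 1 ≤ u i ∧ u i ≤ m i) ∧
      (∃ i < t - 1, u i ≠ m i) ∧
      (1 ≤ u (t - 1) ∧ u (t - 1) ≤ m (t - 1) - 1) ∧
      (∀ i, t ≤ i → i < k → 1 ≤ u i ∧ u i ≤ m i) ∧
      x = eChunk n k m u t k *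
            ⁅eChunk n k m u (t - 1) t, eChunk n k m u 0 (t - 1)⁆ *
            (eChunk n k m u t k)⁻¹ }

/-- The set `S₂ = { (e_k^{i_k}⋯e₁^{i₁}) h_l (e_k^{i_k}⋯e₁^{i₁})⁻¹ ∣ l ∈ [2n],
(i₁,…,i_k) ∈ [m₁]×⋯×[m_k] }` (0-indexed). -/
def S2set (n k : ℕ) (m : ℕ → ℕ) : Set (GG n k m) :=
  { x | ∃ (l : Fin (2 * n)) (u : ℕ → ℕ),
      (∀ i < k, 1 ≤ u i ∧ u i ≤ m i) ∧
      x = eChunk n k m u 0 k * hh n k m l * (eChunk n k m u 0 k)⁻¹ }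


/-!
Sending `eᵢ` to a generator of `ℤ/mᵢ` and every `h_l` to `1` gives a homomorphism
`G → ∏ ℤ/mᵢ` which kills `S₁ ∪ S₂` (commutators and conjugates of the `h_l`) and separates the
representatives, so distinct representatives lie in distinct cosets of `F`.

Conversely, right multiplication by a generator permutes the cosets `F r` of the
representatives `r`. For `h_l` this is `r h_l r⁻¹ ∈ S₂`. For `e_t`, write
`r = g e_t^a c` with `g = e_k^{u_k}⋯e_{t+1}^{u_{t+1}}` and `c = e_{t-1}^{u_{t-1}}⋯e₁^{u₁}`, and let
`r'` be `r` with the exponent `a` advanced cyclically in `[1, m_t]`. Then `r e_t r'⁻¹` is the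
quotient of the two conjugated commutators `g [e_t^a, c] g⁻¹` and `g [e_t^{a+1}, c] g⁻¹`, each of
which is an element of `S₁` or trivial. Since `G` is generated by the `eᵢ` and `h_l`, every
coset contains a representative.
-/

theorem Subgroup.exists_mul_inv_mem_of_closure_eq_top {G ι : Type*} [Group G] (H : Subgroup G)
    {X : Set G} (hX : Subgroup.closure X = ⊤) (r : ι → G) (i₀ : ι) (h₀ : r i₀ ∈ H)
    (hsucc : ∀ x ∈ X, ∀ i, ∃ j, r i * x * (r j)⁻¹ ∈ H)
    (hpred : ∀ x ∈ X, ∀ i, ∃ j, r j * x * (r i)⁻¹ ∈ H) (g : G) :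
    ∃ i, g * (r i)⁻¹ ∈ H := by
  have hg : g ∈ Subgroup.closure X := hX ▸ Subgroup.mem_top g
  induction hg using Subgroup.closure_induction_right with
  | one => exact ⟨i₀, by simpa using H.inv_mem h₀⟩
  | mul_right g _ x hx ih =>
    obtain ⟨i, hi⟩ := ih
    obtain ⟨j, hj⟩ := hsucc x hx i
    exact ⟨j, by simpa [mul_assoc] using H.mul_mem hi hj⟩
  | mul_inv_cancel g _ x hx ih =>
    obtain ⟨i, hi⟩ := ih
    obtain ⟨j, hj⟩ := hpred x hx i
    exact ⟨j, by simpa [mul_assoc] using H.mul_mem hi (H.inv_mem hj)⟩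

def cycSucc (m a : ℕ) : ℕ := if a = m then 1 else a + 1

def cycPred (m a : ℕ) : ℕ := if a = 1 then m else a - 1

section cyclic

variable {m a : ℕ}

theorem cycSucc_mem_Icc (ha : a ∈ Set.Icc 1 m) : cycSucc m a ∈ Set.Icc 1 m := by
  unfold cycSucc; grind

theorem cycPred_mem_Icc (ha : a ∈ Set.Icc 1 m) : cycPred m a ∈ Set.Icc 1 m := by
  unfold cycPred; grind

theorem cycSucc_cycPred (ha : a ∈ Set.Icc 1 m) : cycSucc m (cycPred m a) = a := by
  unfold cycSucc cycPred; grind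

theorem pow_mul_self_eq_pow_cycSucc {G : Type*} [Monoid G] {x : G} (hx : x ^ m = 1) (a : ℕ) :
    x ^ a * x = x ^ cycSucc m a := by
  unfold cycSucc
  split_ifs with h
  · rw [h, hx, one_mul, pow_one]
  · rw [pow_succ]

end cyclic

abbrev FF (n k : ℕ) (m : ℕ → ℕ) : Subgroup (GG n k m) :=
  Subgroup.closure (S1set n k m ∪ S2set n k m)

noncomputable def eExponents (n k : ℕ) (m : ℕ → ℕ) :
    GG n k m →* ((i : Fin k) → Multiplicative (ZMod (m i))) :=
  PresentedGroup.toGroup (f := Sum.elim (fun i => Pi.mulSingle i (.ofAdd 1)) 1) <| by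
    rintro _ ⟨i, rfl⟩
    simp [← Pi.mulSingle_pow, ← ofAdd_nsmul]

section

variable {n k : ℕ} {m : ℕ → ℕ}

theorem ee_pow_eq_one (i : Fin k) : ee n k m i ^ m i = 1 :=
  (map_pow (PresentedGroup.mk _) _ _).symm.trans (PresentedGroup.one_of_mem ⟨i, rfl⟩)

theorem eChunk_self (u : ℕ → ℕ) (s : ℕ) : eChunk n k m u s s = 1 := by
  cases s <;> simp [eChunk]

theorem eChunk_succ_of_le (u : ℕ → ℕ) {s t : ℕ} (h : s ≤ t) :
    eChunk n k m u s (t + 1) =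
      (if ht : t < k then ee n k m ⟨t, ht⟩ ^ u t else 1) * eChunk n k m u s t := by
  simp [eChunk, h]

theorem eChunk_succ_of_lt (u : ℕ → ℕ) {s t : ℕ} (h : t < s) :
    eChunk n k m u s (t + 1) = 1 := by
  simp [eChunk, Nat.not_le.mpr h]

theorem eChunk_mul_eChunk (u : ℕ → ℕ) {r s t : ℕ} (hrs : r ≤ s) (hst : s ≤ t) :
    eChunk n k m u s t * eChunk n k m u r s = eChunk n k m u r t := by
  induction t with
  | zero =>
    obtain rfl : s = 0 := by omega
    rw [eChunk_self, one_mul]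
  | succ t ih =>
    rcases hst.eq_or_lt with rfl | hst
    · rw [eChunk_self, one_mul]
    · rw [eChunk_succ_of_le u (by omega : s ≤ t), eChunk_succ_of_le u (by omega : r ≤ t),
        mul_assoc, ih (by omega)]

theorem eChunk_congr {u v : ℕ → ℕ} (s t : ℕ) (h : ∀ i, s ≤ i → i < t → u i = v i) :
    eChunk n k m u s t = eChunk n k m v s t := by
  induction t with
  | zero => rfl
  | succ t ih =>
    by_cases hst : s ≤ t
    · rw [eChunk_succ_of_le u hst, eChunk_succ_of_le v hst,
        ih (fun i h1 h2 => h i h1 (by omega)), h t hst (by omega)]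
    · rw [eChunk_succ_of_lt u (by omega), eChunk_succ_of_lt v (by omega)]

theorem eChunk_eq_one (u : ℕ → ℕ) (s t : ℕ) (h : ∀ i, s ≤ i → i < t → u i = m i) :
    eChunk n k m u s t = 1 := by
  induction t with
  | zero => rfl
  | succ t ih =>
    by_cases hst : s ≤ t
    · rw [eChunk_succ_of_le u hst, ih (fun i h1 h2 => h i h1 (by omega)), mul_one]
      split_ifs with htk
      · rw [h t hst (by omega)]
        exact ee_pow_eq_one _
      · rfl
    · exact eChunk_succ_of_lt u (by omega)

theorem eChunk_update_of_lt_or_le (u : ℕ → ℕ) {s t i : ℕ} (h : i < s ∨ t ≤ i)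
    (w : ℕ) :
    eChunk n k m (Function.update u i w) s t = eChunk n k m u s t :=
  eChunk_congr _ _ fun _ _ _ => Function.update_of_ne (by omega) _ _

theorem eChunk_succ_self (u : ℕ → ℕ) (i : Fin k) :
    eChunk n k m u i (i + 1) = ee n k m i ^ u i := by
  rw [eChunk_succ_of_le _ le_rfl, dif_pos i.isLt, eChunk_self, mul_one]

theorem eChunk_update_eq (u : ℕ → ℕ) (i : Fin k) (w : ℕ) :
    eChunk n k m (Function.update u i w) 0 k =
      eChunk n k m u (i + 1) k * ee n k m i ^ w * eChunk n k m u 0 i := by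
  calc _ = eChunk n k m (Function.update u i w) (i + 1) k *
          (eChunk n k m (Function.update u i w) i (i + 1) *
            eChunk n k m (Function.update u i w) 0 i) := by
        rw [eChunk_mul_eChunk _ (Nat.zero_le _) (Nat.le_succ _),
          eChunk_mul_eChunk _ (Nat.zero_le _) i.isLt]
    _ = _ := by
        rw [eChunk_update_of_lt_or_le u (.inl i.val.lt_succ_self),
          eChunk_update_of_lt_or_le u (.inr le_rfl), eChunk_succ_self, Function.update_self,
          mul_assoc]

theorem conj_commutator_mem_FF (u : ℕ → ℕ) (i : Fin k)
    (hu : ∀ j < k, j ≠ i → 1 ≤ u j ∧ u j ≤ m j) {w : ℕ} (hw : w ≤ m i) :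
    eChunk n k m u (i + 1) k * ⁅ee n k m i ^ w, eChunk n k m u 0 i⁆ *
      (eChunk n k m u (i + 1) k)⁻¹ ∈ FF n k m := by
  by_cases hc : ⁅ee n k m i ^ w, eChunk n k m u 0 i⁆ = 1
  · rw [hc, mul_one, mul_inv_cancel]
    exact one_mem _
  have hw0 : w ≠ 0 := by rintro rfl; simp at hc
  have hwm : w ≠ m i := by rintro rfl; simp [ee_pow_eq_one] at hc
  obtain ⟨j, hji, hj⟩ : ∃ j < (i : ℕ), u j ≠ m j := by
    by_contra! h
    simp [eChunk_eq_one u 0 i fun j _ hj => h j hj] at hc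
  refine Subgroup.subset_closure (.inl ⟨i + 1, Function.update u i w, by omega, i.isLt,
    fun j hj => ?_, ⟨j, hji, ?_⟩, ?_, fun j hij hjk => ?_, ?_⟩)
  · rw [Function.update_of_ne (by omega)]
    exact hu j (by omega) (by omega)
  · rwa [Function.update_of_ne (by omega)]
  · simp only [Nat.add_sub_cancel, Function.update_self]
    omega
  · rw [Function.update_of_ne (by omega)]
    exact hu j hjk (by omega)
  · rw [Nat.add_sub_cancel, eChunk_update_of_lt_or_le u (.inl i.val.lt_succ_self),
      eChunk_update_of_lt_or_le u (.inr le_rfl), eChunk_succ_self, Function.update_self]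

theorem eChunk_mul_ee_mul_inv_mem_FF (u : ℕ → ℕ) (hu : ∀ j < k, 1 ≤ u j ∧ u j ≤ m j)
    (i : Fin k) :
    eChunk n k m u 0 k * ee n k m i *
      (eChunk n k m (Function.update u i (cycSucc (m i) (u i))) 0 k)⁻¹ ∈ FF n k m := by
  have hsucc := pow_mul_self_eq_pow_cycSucc (ee_pow_eq_one (n := n) (m := m) i) (u i)
  have hcomm (w : ℕ) (hw : w ≤ m i) :=
    conj_commutator_mem_FF (n := n) u i (fun j hj _ => hu j hj) hw
  have hrep := eChunk_update_eq (n := n) (m := m) u i (u i)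
  rw [Function.update_eq_self] at hrep
  have key (g x c a : GG n k m) :
      g * x * c * a * (g * (x * a) * c)⁻¹ =
        (g * ⁅x, c⁆ * g⁻¹) * (g * ⁅x * a, c⁆ * g⁻¹)⁻¹ := by
    simp only [commutatorElement_def]
    group
  rw [hrep, eChunk_update_eq, ← hsucc, key]
  refine mul_mem (hcomm _ (hu i i.isLt).2) (inv_mem ?_)
  rw [hsucc]
  exact hcomm _ (cycSucc_mem_Icc (hu i i.isLt)).2

theorem eExponents_ee (i : Fin k) :
    eExponents n k m (ee n k m i) = Pi.mulSingle i (.ofAdd 1) :=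
  PresentedGroup.toGroup.of _

theorem eExponents_hh (j : Fin (2 * n)) : eExponents n k m (hh n k m j) = 1 :=
  PresentedGroup.toGroup.of _

theorem eExponents_eChunk (u : ℕ → ℕ) (t : ℕ) (i : Fin k) :
    eExponents n k m (eChunk n k m u 0 t) i =
      if (i : ℕ) < t then .ofAdd (u i : ZMod (m i)) else 1 := by
  induction t with
  | zero => simp [eChunk]
  | succ t ih =>
    have hfactor : eExponents n k m (if ht : t < k then ee n k m ⟨t, ht⟩ ^ u t else 1) i =
        if (i : ℕ) = t then .ofAdd (u i : ZMod (m i)) else 1 := by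
      split_ifs with htk hit hit
      · obtain rfl : i = ⟨t, htk⟩ := Fin.ext hit
        simp [eExponents_ee, ← ofAdd_nsmul]
      · simp [eExponents_ee, Fin.ext_iff, hit]
      · omega
      · simp
    rw [eChunk_succ_of_le u (Nat.zero_le t), map_mul, Pi.mul_apply, ih, hfactor]
    split_ifs <;> first | omega | simp

theorem FF_le_ker_eExponents : FF n k m ≤ (eExponents n k m).ker := by
  rw [Subgroup.closure_le]
  rintro x (⟨t, u, -, -, -, -, -, -, rfl⟩ | ⟨l, u, -, rfl⟩) <;>
    simp [map_commutatorElement, commutatorElement_eq_one_iff_commute, Commute.all,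
      eExponents_hh]

theorem eq_of_eChunk_mul_inv_mem_FF {u v : ℕ → ℕ} (hu : ∀ i < k, 1 ≤ u i ∧ u i ≤ m i)
    (hv : ∀ i < k, 1 ≤ v i ∧ v i ≤ m i)
    (h : eChunk n k m v 0 k * (eChunk n k m u 0 k)⁻¹ ∈ FF n k m) (i : ℕ) (hi : i < k) :
    u i = v i := by
  have hker := FF_le_ker_eExponents h
  rw [MonoidHom.mem_ker, map_mul, map_inv, mul_inv_eq_one] at hker
  have hmod := congrFun hker ⟨i, hi⟩
  simp only [eExponents_eChunk, hi, if_true, Multiplicative.ofAdd.injective.eq_iff,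
    ZMod.natCast_eq_natCast_iff] at hmod
  exact hmod.symm.eq_of_abs_lt (abs_sub_lt_iff.mpr ⟨by grind, by grind⟩)

theorem exists_mul_inv_eChunk_mem_FF (hm : ∀ i < k, 1 ≤ m i) (g : GG n k m) :
    ∃ u : ℕ → ℕ, (∀ i < k, 1 ≤ u i ∧ u i ≤ m i) ∧
      g * (eChunk n k m u 0 k)⁻¹ ∈ FF n k m := by
  have hupdate (u : ℕ → ℕ) (hu : ∀ j < k, 1 ≤ u j ∧ u j ≤ m j) (i : Fin k) {w : ℕ}
      (hw : 1 ≤ w ∧ w ≤ m i) :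
      ∀ j < k, 1 ≤ Function.update u i w j ∧ Function.update u i w j ≤ m j := by
    intro j hj
    rcases eq_or_ne j i with rfl | hne
    · simpa using hw
    · rw [Function.update_of_ne hne]
      exact hu j hj
  have hconj (u : ℕ → ℕ) (hu : ∀ j < k, 1 ≤ u j ∧ u j ≤ m j) (j : Fin (2 * n)) :
      eChunk n k m u 0 k * hh n k m j * (eChunk n k m u 0 k)⁻¹ ∈ FF n k m :=
    Subgroup.subset_closure (.inr ⟨j, u, hu, rfl⟩)
  let r (u : {u : ℕ → ℕ // ∀ i < k, 1 ≤ u i ∧ u i ≤ m i}) : GG n k m :=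
    eChunk n k m u.1 0 k
  have hsucc :
      ∀ x ∈ Set.range PresentedGroup.of, ∀ u, ∃ v, r u * x * (r v)⁻¹ ∈ FF n k m := by
    rintro _ ⟨i | j, rfl⟩ ⟨u, hu⟩
    · exact ⟨⟨_, hupdate u hu i (cycSucc_mem_Icc (hu i i.isLt))⟩,
        eChunk_mul_ee_mul_inv_mem_FF u hu i⟩
    · exact ⟨⟨u, hu⟩, hconj u hu j⟩
  have hpred :
      ∀ x ∈ Set.range PresentedGroup.of, ∀ u, ∃ v, r v * x * (r u)⁻¹ ∈ FF n k m := by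
    rintro _ ⟨i | j, rfl⟩ ⟨u, hu⟩
    · have hv := hupdate u hu i (cycPred_mem_Icc (hu i i.isLt))
      refine ⟨⟨_, hv⟩, ?_⟩
      simpa [r, ee, cycSucc_cycPred (hu i i.isLt)] using eChunk_mul_ee_mul_inv_mem_FF _ hv i
    · exact ⟨⟨u, hu⟩, hconj u hu j⟩
  obtain ⟨⟨u, hu⟩, hg⟩ := (FF n k m).exists_mul_inv_mem_of_closure_eq_top
    (PresentedGroup.closure_range_of _) r ⟨m, fun i hi => ⟨hm i hi, le_rfl⟩⟩
    (by simp [r, eChunk_eq_one]) hsucc hpred g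
  exact ⟨u, hu, hg⟩

end

theorem coset_representatives_bijective_general
    (n k : ℕ) (m : ℕ → ℕ) (hm : ∀ i < k, 2 ≤ m i) :
    Function.Bijective
      (fun u : {u : Fin k → ℕ // ∀ i : Fin k, 1 ≤ u i ∧ u i ≤ m i.val} =>
        Quotient.mk
          (QuotientGroup.rightRel (Subgroup.closure (S1set n k m ∪ S2set n k m)))
          (eChunk n k m (fun i => if h : i < k then u.1 ⟨i, h⟩ else 0) 0 k)) := by
  have hbox (u : {u : Fin k → ℕ // ∀ i : Fin k, 1 ≤ u i ∧ u i ≤ m i.val}) :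
      ∀ i < k, 1 ≤ (if h : i < k then u.1 ⟨i, h⟩ else 0) ∧
        (if h : i < k then u.1 ⟨i, h⟩ else 0) ≤ m i := fun i hi => by
    simpa [hi] using u.2 ⟨i, hi⟩
  refine ⟨fun u v huv => ?_, fun q => ?_⟩
  · have hcoset := QuotientGroup.rightRel_apply.mp (Quotient.exact huv)
    ext i
    simpa using eq_of_eChunk_mul_inv_mem_FF (hbox u) (hbox v) hcoset i i.isLt
  · induction q using Quotient.inductionOn with | h g => ?_
    obtain ⟨u, hu, hg⟩ :=
      exists_mul_inv_eChunk_mem_FF (fun i hi => one_le_two.trans (hm i hi)) g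
    refine ⟨⟨fun i => u i, fun i => hu i i.isLt⟩,
      Quotient.sound <| QuotientGroup.rightRel_apply.mpr ?_⟩
    rwa [eChunk_congr (v := u) 0 k fun i _ hi => dif_pos hi]

/-- The elements `e_k^{i_k}⋯e₁^{i₁}`, `(i₁,…,i_k) ∈ [m₁]×⋯×[m_k]`, form a complete set of
representatives of the right coset space `F\G`, `F = ⟨S₁ ∪ S₂⟩`: the map
`(i₁,…,i_k) ↦ F·e_k^{i_k}⋯e₁^{i₁}` is a bijection onto the right cosets of `F` in `G`. -/
theorem coset_representatives_bijective
    (n k : ℕ) (m : ℕ → ℕ) (hk : 1 ≤ k) (hm : ∀ i < k, 2 ≤ m i) :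
    Function.Bijective
      (fun u : {u : Fin k → ℕ // ∀ i : Fin k, 1 ≤ u i ∧ u i ≤ m i.val} =>
        Quotient.mk
          (QuotientGroup.rightRel (Subgroup.closure (S1set n k m ∪ S2set n k m)))
          (eChunk n k m (fun i => if h : i < k then u.1 ⟨i, h⟩ else 0) 0 k)) :=
  coset_representatives_bijective_general n k m hm
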